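/- Let $(R,\mathfrak{m})$ be a two-dimensional regular local ring with regular system of parameters $x, y$, and let $0 < \alpha < n < 2\alpha$ be integers. Set $I = (x^3, x^2 y^{\alpha}, y^n)$ and $J = (x, y^{n-\alpha})$. Then $\mu_R(IJ) = 4$ and $\mu_R(\mathfrak{m}J) = 3$; explicitly $IJ = (x^4, x^3y^{n-\alpha}, xy^n, y^{2n-\alpha})$ and $\mathfrak{m}J = (x^2, xy, y^{n-\alpha+1})$, each being a minimal generating set. -/

import Mathlib

/-!
Krull's principal ideal theorem gives a prime `P ⊇ (x)` of height at most one, so `P ≠ 𝔪 = (x, y)`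
and `y ∉ P`; Nakayama applied to `P = (x) + yP` then shows `P = (x)`, so `x` is prime, and `y ∉ (x)`
because `𝔪` is not principal. Consequently a monomial `xᵃyᵇ` lies in an ideal generated by
monomials only if one of them divides it: otherwise the generators not divisible by `x` are
multiples of `y^(b+1)`, so `xᵃyᵇ = s y^(b+1) + x t`, and one cancels `x` and inducts on `a`, the case
`a = 0` being impossible because `yᵇ(1 - sy) ∉ (x)`.

Both products are monomial ideals, computed on exponents, and their minimal exponents form
antichains. Hence no generator lies in the ideal of the others, which in a local ring makes the
generators independent modulo `𝔪K`, and `μ(K) = dim_k K/𝔪K` counts them.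
-/

open Ideal IsLocalRing Submodule

/-- Minimal number of generators of an ideal. -/
noncomputable def mu {R : Type*} [CommRing R] (I : Ideal R) : ℕ :=
  sInf {n : ℕ | ∃ s : Finset R, s.card = n ∧ Ideal.span (s : Set R) = I}

open scoped Pointwise

section

variable {R : Type*} [CommRing R]

theorem mu_eq_spanFinrank (I : Ideal R) : mu I = I.spanFinrank := by
  rw [spanFinrank_eq_iInf, mu, iInf]
  congr 1
  ext n
  simp [eq_comm, and_comm, Ideal.span]

section LocalRing

variable [IsLocalRing R]

theorem spanFinrank_span_range_eq_card {ι : Type*} [Fintype ι] (g : ι → R)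
    (hg : ∀ c : ι → R, ∑ i, c i * g i ∈ maximalIdeal R * span (Set.range g) →
      ∀ i, c i ∈ maximalIdeal R) :
    (span (Set.range g)).spanFinrank = Fintype.card ι := by
  set K : Ideal R := span (Set.range g)
  have hK : K.FG := ⟨(Set.finite_range g).toFinset, by simp [K]⟩
  refine le_antisymm ?_ ?_
  · refine (spanFinrank_span_le_ncard_of_finite (Set.finite_range g)).trans ?_
    rw [← Set.image_univ, ← Nat.card_eq_fintype_card, ← Set.ncard_univ]
    exact Set.ncard_image_le
  rw [spanFinrank_eq_finrank_quotient K hK]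
  let v : ι → K ⧸ maximalIdeal R • (⊤ : Submodule R K) := fun i =>
    Submodule.Quotient.mk ⟨g i, Ideal.subset_span ⟨i, rfl⟩⟩
  have : Module.Finite R K := Module.Finite.iff_fg.mpr hK
  have : Module.Finite (R ⧸ maximalIdeal R) (K ⧸ maximalIdeal R • (⊤ : Submodule R K)) :=
    Module.Finite.of_restrictScalars_finite R _ _
  refine LinearIndependent.fintype_card_le_finrank (b := v) ?_
  rw [Fintype.linearIndependent_iff]
  intro c hc i
  choose a ha using fun i => Ideal.Quotient.mk_surjective (c i)
  obtain rfl : c = fun i => Ideal.Quotient.mk _ (a i) := funext fun i => (ha i).symm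
  have hmem : (∑ j, a j • (⟨g j, Ideal.subset_span ⟨j, rfl⟩⟩ : K)) ∈
      maximalIdeal R • (⊤ : Submodule R K) := by
    rw [← Submodule.Quotient.mk_eq_zero, ← Submodule.mkQ_apply, map_sum]
    exact hc
  rw [mem_smul_top_iff, Submodule.coe_sum] at hmem
  rw [Ideal.Quotient.eq_zero_iff_mem]
  exact hg a (by simpa using hmem) i

theorem mem_maximalIdeal_of_sum_mul_mem {ι : Type*} [Fintype ι] [DecidableEq ι] {g : ι → R}
    (hg : ∀ i, g i ∉ span (g '' {i}ᶜ)) {c : ι → R}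
    (hc : ∑ j, c j * g j ∈ maximalIdeal R * span (Set.range g)) (i : ι) :
    c i ∈ maximalIdeal R := by
  set G := span (g '' {i}ᶜ)
  have hgG : ∀ j ≠ i, g j ∈ G := fun j hj => Ideal.subset_span ⟨j, hj, rfl⟩
  have hK : span (Set.range g) ≤ span {g i} ⊔ G := by
    rw [Ideal.span_le]
    rintro _ ⟨j, rfl⟩
    obtain rfl | hj := eq_or_ne j i
    · exact Submodule.mem_sup_left (Ideal.mem_span_singleton_self _)
    · exact Submodule.mem_sup_right (hgG j hj)
  have hcg : c i * g i ∈ maximalIdeal R * span {g i} ⊔ G := by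
    have hmK := Ideal.mul_mono_right hK hc
    rw [Ideal.mul_sup, ← Finset.add_sum_erase _ _ (Finset.mem_univ i)] at hmK
    refine (Submodule.add_mem_iff_left _ (Submodule.mem_sup_right ?_)).mp
      (sup_le_sup_left (Ideal.mul_le_right : maximalIdeal R * G ≤ G) _ hmK)
    exact sum_mem fun j hj => G.mul_mem_left _ (hgG j (Finset.ne_of_mem_erase hj))
  obtain ⟨_, he', w, hw, hew⟩ := Submodule.mem_sup.mp hcg
  obtain ⟨e, he, rfl⟩ := Ideal.mem_mul_span_singleton.mp he'
  by_contra hci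
  have hunit : IsUnit (c i - e) := by
    by_contra h
    exact hci (by simpa using add_mem ((mem_maximalIdeal _).mpr h) he)
  apply hg i
  rw [← Ideal.unit_mul_mem_iff_mem G hunit]
  convert hw using 1
  linear_combination -hew

end LocalRing

section Parameters

variable [IsNoetherianRing R] [IsLocalRing R] {x y : R}

theorem ringKrullDim_le_one_of_maximalIdeal_eq_span_singleton (hm : maximalIdeal R = span {x}) :
    ringKrullDim R ≤ 1 := by
  refine (ringKrullDim_le_spanFinrank_maximalIdeal R).trans ?_
  rw [hm]
  exact_mod_cast (spanFinrank_span_le_ncard_of_finite (Set.finite_singleton x)).trans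
    (Set.ncard_singleton x).le

theorem not_dvd_of_maximalIdeal_eq_span_pair (hm : maximalIdeal R = span {x, y})
    (hdim : 1 < ringKrullDim R) : ¬ x ∣ y := by
  intro hxy
  refine hdim.not_ge (ringKrullDim_le_one_of_maximalIdeal_eq_span_singleton (x := x) ?_)
  rw [hm, Ideal.span_insert, sup_eq_left, span_singleton_le_span_singleton]
  exact hxy

theorem eq_span_singleton_of_maximalIdeal_eq_span_pair (hm : maximalIdeal R = span {x, y})
    {P : Ideal R} [P.IsPrime] (hxP : x ∈ P) (hyP : y ∉ P) : P = span {x} := by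
  refine le_antisymm ?_ (Ideal.span_le.mpr (by simpa using hxP))
  refine Submodule.le_of_le_smul_of_le_jacobson_bot (I := span {y}) (IsNoetherian.noetherian P)
    (by rw [jacobson_eq_maximalIdeal _ bot_ne_top, hm]; exact Ideal.span_mono (by simp)) ?_
  intro a ha
  obtain ⟨u, v, rfl⟩ := Ideal.mem_span_pair.mp (hm ▸ le_maximalIdeal IsPrime.ne_top' ha)
  have hv : v ∈ P := by
    refine (‹P.IsPrime›.mem_or_mem ?_).resolve_right hyP
    simpa using P.sub_mem ha (P.mul_mem_left u hxP)
  exact add_mem (Submodule.mem_sup_left (mem_span_singleton.mpr (dvd_mul_left x u)))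
    (Submodule.mem_sup_right
      (by rw [mul_comm]; exact smul_mem_smul (Ideal.mem_span_singleton_self y) hv))

theorem prime_of_maximalIdeal_eq_span_pair (hm : maximalIdeal R = span {x, y})
    (hdim : 1 < ringKrullDim R) : Prime x := by
  have hyx : ¬ y ∣ x := not_dvd_of_maximalIdeal_eq_span_pair (Set.pair_comm x y ▸ hm) hdim
  have hx0 : x ≠ 0 := by rintro rfl; exact hyx (dvd_zero y)
  obtain ⟨P, hP, hPm⟩ := exists_minimalPrimes_le (J := maximalIdeal R)
    (hm ▸ Ideal.span_mono (by simp) : span {x} ≤ maximalIdeal R)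
  have := hP.isPrime
  have hxP : x ∈ P := hP.1.2 (Ideal.mem_span_singleton_self x)
  have hyP : y ∉ P := by
    intro hyP
    have hPm : P = maximalIdeal R :=
      le_antisymm hPm (hm ▸ Ideal.span_le.mpr (Set.insert_subset hxP (by simpa using hyP)))
    have h1 := height_le_one_of_isPrincipal_of_mem_minimalPrimes _ _ hP
    rw [hPm] at h1
    refine hdim.not_ge ?_
    rw [← maximalIdeal_height_eq_ringKrullDim]
    exact_mod_cast h1
  rw [← span_singleton_prime hx0, ← eq_span_singleton_of_maximalIdeal_eq_span_pair hm hxP hyP]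
  exact hP.isPrime

end Parameters

end

section

variable {R : Type*} [CommSemiring R]

def pairMonomial (x y : R) (e : ℕ × ℕ) : R := x ^ e.1 * y ^ e.2

namespace pairMonomial

variable {x y : R}

@[simp]
theorem mk_apply (a b : ℕ) : pairMonomial x y (a, b) = x ^ a * y ^ b := rfl

theorem add (e f : ℕ × ℕ) :
    pairMonomial x y (e + f) = pairMonomial x y e * pairMonomial x y f := by
  simp only [pairMonomial, Prod.fst_add, Prod.snd_add, pow_add]
  ring

theorem dvd_of_le {e f : ℕ × ℕ} (h : e ≤ f) : pairMonomial x y e ∣ pairMonomial x y f :=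
  ⟨pairMonomial x y (f - e), by rw [← add, add_tsub_cancel_of_le h]⟩

theorem span_mul_span (S T : Set (ℕ × ℕ)) :
    span (pairMonomial x y '' S) * span (pairMonomial x y '' T) =
      span (pairMonomial x y '' (S + T)) := by
  rw [Ideal.span_mul_span', ← Set.image2_add, ← Set.image2_mul, Set.image_image2_distrib add]

theorem span_image_eq_of_forall_exists_le {S T : Set (ℕ × ℕ)} (hTS : T ⊆ S)
    (h : ∀ e ∈ S, ∃ f ∈ T, f ≤ e) :
    span (pairMonomial x y '' S) = span (pairMonomial x y '' T) := by
  refine le_antisymm ?_ (Ideal.span_mono (Set.image_mono hTS))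
  rw [Ideal.span_le]
  rintro _ ⟨e, he, rfl⟩
  obtain ⟨f, hf, hfe⟩ := h e he
  exact Ideal.span_mono (Set.singleton_subset_iff.mpr (Set.mem_image_of_mem _ hf))
    (Ideal.mem_span_singleton.mpr (dvd_of_le hfe))

theorem span_pair_mul_span_pair (k : ℕ) (hk : 1 ≤ k) :
    span (pairMonomial x y '' {(1, 0), (0, 1)}) * span (pairMonomial x y '' {(1, 0), (0, k)}) =
      span (pairMonomial x y '' {(2, 0), (1, 1), (0, k + 1)}) := by
  rw [span_mul_span]
  apply span_image_eq_of_forall_exists_le <;>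
    simp only [Set.insert_eq, Set.union_add, Set.add_union, Set.singleton_add_singleton,
      Prod.mk_add_mk]
  · simp [Set.insert_subset_iff]
    omega
  · simp [Prod.le_def, or_imp, forall_and]
    omega

theorem span_triple_mul_span_pair {α n : ℕ} (hαn : α ≤ n) (hn2α : n ≤ 2 * α) :
    span (pairMonomial x y '' {(3, 0), (2, α), (0, n)}) *
        span (pairMonomial x y '' {(1, 0), (0, n - α)}) =
      span (pairMonomial x y '' {(4, 0), (3, n - α), (1, n), (0, 2 * n - α)}) := by
  rw [span_mul_span]
  apply span_image_eq_of_forall_exists_le <;>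
    simp only [Set.insert_eq, Set.union_add, Set.add_union, Set.singleton_add_singleton,
      Prod.mk_add_mk]
  · simp [Set.insert_subset_iff]
    omega
  · simp [Prod.le_def, or_imp, forall_and]
    omega

theorem span_image_le_sup {S : Set (ℕ × ℕ)} {a b : ℕ} (hS : ∀ e ∈ S, ¬ e ≤ (a, b)) :
    span (pairMonomial x y '' S) ≤
      span {y ^ (b + 1)} ⊔ span {x} * span (pairMonomial x y '' {e | (e.1 + 1, e.2) ∈ S}) := by
  rw [Ideal.span_le]
  rintro _ ⟨⟨_ | k, l⟩, he, rfl⟩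
  · refine Submodule.mem_sup_left (Ideal.mem_span_singleton.mpr ?_)
    simpa using pow_dvd_pow y (by simpa [Prod.le_def] using hS _ he : b < l)
  · refine Submodule.mem_sup_right
      (Ideal.mem_span_singleton_mul.mpr ⟨_, Ideal.subset_span ⟨(k, l), he, rfl⟩, ?_⟩)
    simp only [mk_apply]
    ring

end pairMonomial

end

namespace pairMonomial

variable {R : Type*} [CommRing R] [IsDomain R] [IsLocalRing R] {x y : R}

theorem exists_le_of_mem_span_image (hx : Prime x) (hxy : ¬ x ∣ y) (hy : y ∈ maximalIdeal R)
    {S : Set (ℕ × ℕ)} {a b : ℕ} (h : pairMonomial x y (a, b) ∈ span (pairMonomial x y '' S)) :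
    ∃ e ∈ S, e ≤ (a, b) := by
  have hxyb : ∀ k, ¬ x ∣ y ^ k := fun k hk => hxy (hx.dvd_of_dvd_pow hk)
  induction a generalizing S with
  | zero =>
    by_contra! hS
    obtain ⟨_, hs, _, ht, hst⟩ := Submodule.mem_sup.mp (span_image_le_sup hS h)
    obtain ⟨s, rfl⟩ := Ideal.mem_span_singleton'.mp hs
    obtain ⟨t, -, rfl⟩ := Ideal.mem_span_singleton_mul.mp ht
    have hunit : IsUnit (1 - s * y) :=
      isUnit_one_sub_self_of_mem_nonunits _ ((maximalIdeal R).mul_mem_left s hy)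
    refine (hx.dvd_or_dvd ⟨t, ?_⟩).elim (hxyb b)
      (fun h => hx.not_isUnit (isUnit_of_dvd_unit h hunit))
    simp only [mk_apply] at hst
    linear_combination -hst
  | succ a ih =>
    by_contra! hS
    obtain ⟨_, hs, _, ht, hst⟩ := Submodule.mem_sup.mp (span_image_le_sup hS h)
    obtain ⟨s, rfl⟩ := Ideal.mem_span_singleton'.mp hs
    obtain ⟨t, ht', rfl⟩ := Ideal.mem_span_singleton_mul.mp ht
    simp only [mk_apply] at hst
    obtain ⟨s, rfl⟩ : x ∣ s := (hx.dvd_or_dvd (show x ∣ s * y ^ (b + 1) from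
      ⟨x ^ a * y ^ b - t, by linear_combination hst⟩)).resolve_right (hxyb _)
    have hcancel : pairMonomial x y (a, b) = s * y ^ (b + 1) + t :=
      mul_left_cancel₀ hx.ne_zero (by simp only [mk_apply]; linear_combination -hst)
    obtain ⟨e, he, hle⟩ := ih (S := insert (0, b + 1) {e | (e.1 + 1, e.2) ∈ S}) <| by
      rw [hcancel, Set.image_insert_eq, Ideal.span_insert]
      exact Submodule.add_mem_sup (Ideal.mem_span_singleton.mpr ⟨s, by simp [mul_comm]⟩) ht'
    rcases he with rfl | he
    · simp [Prod.le_def] at hle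
    · exact hS _ he (by simpa [Prod.le_def] using hle)

theorem spanFinrank_span_image_range (hx : Prime x) (hxy : ¬ x ∣ y) (hy : y ∈ maximalIdeal R)
    {ι : Type*} [Fintype ι] (E : ι → ℕ × ℕ) (hE : Pairwise fun i j => ¬ E i ≤ E j) :
    (span (pairMonomial x y '' Set.range E)).spanFinrank = Fintype.card ι := by
  classical
  rw [← Set.range_comp]
  refine spanFinrank_span_range_eq_card _ fun c hc => mem_maximalIdeal_of_sum_mul_mem ?_ hc
  intro i hi
  rw [Set.image_comp] at hi
  obtain ⟨_, ⟨j, hji, rfl⟩, hle⟩ := exists_le_of_mem_span_image hx hxy hy hi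
  exact hE hji hle

theorem mu_span_image (hx : Prime x) (hxy : ¬ x ∣ y) (hy : y ∈ maximalIdeal R)
    {S : Set (ℕ × ℕ)} {k : ℕ} (E : Fin k → ℕ × ℕ) (hES : Set.range E = S)
    (hE : Pairwise fun i j => ¬ E i ≤ E j) : mu (span (pairMonomial x y '' S)) = k := by
  rw [mu_eq_spanFinrank, ← hES, spanFinrank_span_image_range hx hxy hy E hE, Fintype.card_fin]

end pairMonomial

theorem mu_IJ_and_mJ_general {R : Type*} [CommRing R] [IsDomain R] [IsNoetherianRing R]
    [IsLocalRing R] (x y : R) (hm : maximalIdeal R = Ideal.span {x, y})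
    (hdim : ringKrullDim R = 2)
    (α n : ℕ) (hαn : α < n) (hn2α : n < 2 * α)
    (I J : Ideal R)
    (hI : I = Ideal.span {x ^ 3, x ^ 2 * y ^ α, y ^ n})
    (hJ : J = Ideal.span {x, y ^ (n - α)}) :
    mu (I * J) = 4 ∧ mu (maximalIdeal R * J) = 3 ∧
      I * J = Ideal.span {x ^ 4, x ^ 3 * y ^ (n - α), x * y ^ n, y ^ (2 * n - α)} ∧
      maximalIdeal R * J = Ideal.span {x ^ 2, x * y, y ^ (n - α + 1)} := by
  have hdim' : 1 < ringKrullDim R := by rw [hdim]; decide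
  have hx := prime_of_maximalIdeal_eq_span_pair hm hdim'
  have hxy := not_dvd_of_maximalIdeal_eq_span_pair hm hdim'
  have hy : y ∈ maximalIdeal R := hm ▸ Ideal.subset_span (by simp)
  have hIJ : I * J = span (pairMonomial x y '' {(4, 0), (3, n - α), (1, n), (0, 2 * n - α)}) := by
    rw [← pairMonomial.span_triple_mul_span_pair hαn.le hn2α.le, hI, hJ]
    simp [Set.image_insert_eq]
  have hmJ : maximalIdeal R * J = span (pairMonomial x y '' {(2, 0), (1, 1), (0, n - α + 1)}) := by
    rw [← pairMonomial.span_pair_mul_span_pair _ (by omega), hm, hJ]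
    simp [Set.image_insert_eq]
  refine ⟨?_, ?_, by simpa [Set.image_insert_eq] using hIJ, by simpa [Set.image_insert_eq] using hmJ⟩
  · rw [hIJ]
    refine pairMonomial.mu_span_image hx hxy hy ![(4, 0), (3, n - α), (1, n), (0, 2 * n - α)]
      (by simp only [Matrix.range_cons, Matrix.range_empty, Set.union_empty, Set.singleton_union])
      fun i j hij => ?_
    fin_cases i <;> fin_cases j <;> simp [Prod.le_def] at hij ⊢ <;> omega
  · rw [hmJ]
    refine pairMonomial.mu_span_image hx hxy hy ![(2, 0), (1, 1), (0, n - α + 1)]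
      (by simp only [Matrix.range_cons, Matrix.range_empty, Set.union_empty, Set.singleton_union])
      fun i j hij => ?_
    fin_cases i <;> fin_cases j <;> simp [Prod.le_def] at hij ⊢
    omega

/-- For `0 < α < n < 2α`, `I = (x³, x²yᵅ, yⁿ)` and `J = (x, y^(n-α))`:
`μ(IJ) = 4` and `μ(𝔪J) = 3`, with explicit minimal generating sets
`IJ = (x⁴, x³y^(n-α), xyⁿ, y^(2n-α))` and `𝔪J = (x², xy, y^(n-α+1))`. -/
theorem mu_IJ_and_mJ {R : Type*} [CommRing R] [IsDomain R] [IsNoetherianRing R]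
    [IsLocalRing R] (x y : R) (hm : maximalIdeal R = Ideal.span {x, y})
    (hdim : ringKrullDim R = 2)
    (α n : ℕ) (hα : 0 < α) (hαn : α < n) (hn2α : n < 2 * α)
    (I J : Ideal R)
    (hI : I = Ideal.span {x ^ 3, x ^ 2 * y ^ α, y ^ n})
    (hJ : J = Ideal.span {x, y ^ (n - α)}) :
    mu (I * J) = 4 ∧ mu (maximalIdeal R * J) = 3 ∧
      I * J = Ideal.span {x ^ 4, x ^ 3 * y ^ (n - α), x * y ^ n, y ^ (2 * n - α)} ∧
      maximalIdeal R * J = Ideal.span {x ^ 2, x * y, y ^ (n - α + 1)} :=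
  mu_IJ_and_mJ_general x y hm hdim α n hαn hn2α I J hI hJ
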